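/- arXiv:1601.02914 — 2 statements merged into one kernel-verified Lean document; each statement's English description precedes it below -/
import Mathlib

section
/- For every n ≥ 1, the star K_{1,n} satisfies τ(K_{1,n}) = (2n+1)/(n+1); consequently the infimum over all graphs G with at least one edge of τ(G) is strictly less than 2. -/
/-!
If `φ` is a Thue colouring of `G` with two colours, it stays one on every graph obtained by
deleting edges, so each of these has Thue number `2` while an edge remains and `1` once none
does. Every edge ordering of such a graph with `ε` edges therefore has τ-value
`(2ε + 1)/(ε + 1)`. In a star every path has at most three vertices, so colouring the centre
and the leaves differently is a Thue colouring; and `K₂ = K_{1,1}` has `τ = 3/2 < 2`.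
-/

open SimpleGraph Function

/-- A Thue colouring of a simple graph `G`: a proper vertex colouring such that the
colour sequence along any path (here: the support of a path-walk) is non-repetitive,
i.e. it is never a square `l ++ l` with `l` nonempty. -/
def IsThueColoring {V α : Type*} (G : SimpleGraph V) (φ : V → α) : Prop :=
  (∀ ⦃a b : V⦄, G.Adj a b → φ a ≠ φ b) ∧
  ∀ ⦃a b : V⦄ (p : G.Walk a b), p.IsPath →
    ∀ l : List α, l ≠ [] → p.support.map φ ≠ l ++ l

/-- The Thue chromatic number `π(G)`: the least number of colours admitting a Thue
colouring of `G`. -/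
noncomputable def thueNumber {V : Type*} (G : SimpleGraph V) : ℕ :=
  sInf {k | ∃ φ : V → Fin k, IsThueColoring G φ}
/-- `l` is an ordering (a listing without repetition) of the edges of `G`. -/
def IsEdgeOrdering {V : Type*} (G : SimpleGraph V) (l : List (Sym2 V)) : Prop :=
  l.Nodup ∧ ∀ e, e ∈ l ↔ e ∈ G.edgeSet

/-- The τ-value of an edge ordering: the average `(1/(ε+1)) Σ_{i=0}^{ε} π(G*ᵢ)` of the
Thue numbers of the graphs obtained by successively deleting the edges in order. -/
noncomputable def tauValue {V : Type*} (G : SimpleGraph V) (l : List (Sym2 V)) : ℝ :=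
  (∑ i ∈ Finset.range (l.length + 1),
    (thueNumber (G.deleteEdges {e | e ∈ l.take i}) : ℝ)) / (l.length + 1)

/-- The τ-index of a graph: the minimum τ-value over all orderings of its edges. -/
noncomputable def tauIndex {V : Type*} (G : SimpleGraph V) : ℝ :=
  sInf {x | ∃ l : List (Sym2 V), IsEdgeOrdering G l ∧ tauValue G l = x}

section Thue

variable {V α : Type*} {G H : SimpleGraph V}

theorem isThueColoring_of_isPath_length_le_two {φ : V → α}
    (hproper : ∀ ⦃a b : V⦄, G.Adj a b → φ a ≠ φ b)
    (hshort : ∀ ⦃a b : V⦄ (p : G.Walk a b), p.IsPath → p.length ≤ 2) :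
    IsThueColoring G φ := by
  refine ⟨hproper, fun a b p hp l hl hsq => ?_⟩
  -- a square `l ++ l` on at most three vertices is the colour sequence of a single edge
  have hlen : p.length + 1 = l.length + l.length := by
    rw [← Walk.length_support, ← List.length_map (f := φ), hsq, List.length_append]
  have := hshort p hp
  have := List.length_pos_of_ne_nil hl
  obtain ⟨x, rfl⟩ : ∃ x, l = [x] := List.length_eq_one_iff.mp (by omega)
  cases p with
  | nil => simp at hlen
  | cons hab q =>
    cases q with
    | nil =>
      simp only [Walk.support_cons, Walk.support_nil, List.map_cons, List.map_nil,
        List.cons_append, List.nil_append, List.cons.injEq, and_true] at hsq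
      exact hproper hab (hsq.1.trans hsq.2.symm)
    | cons _ q' => simp at hlen

theorem IsThueColoring.anti {φ : V → α} (hφ : IsThueColoring G φ) (hle : H ≤ G) :
    IsThueColoring H φ := by
  refine ⟨fun a b hab => hφ.1 (hle hab), fun a b p hp l hl => ?_⟩
  rw [← Walk.support_mapLe_eq_support hle]
  exact hφ.2 (p.mapLe hle) (hp.mapLe hle) l hl

theorem thueNumber_le {k : ℕ} {φ : V → Fin k} (hφ : IsThueColoring G φ) :
    thueNumber G ≤ k :=
  Nat.sInf_le ⟨φ, hφ⟩

theorem exists_isThueColoring_thueNumber {k : ℕ} {φ : V → Fin k} (hφ : IsThueColoring G φ) :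
    ∃ ψ : V → Fin (thueNumber G), IsThueColoring G ψ :=
  Nat.sInf_mem (s := {k | ∃ φ : V → Fin k, IsThueColoring G φ}) ⟨k, φ, hφ⟩

theorem thueNumber_eq_two {φ : V → Fin 2} (hφ : IsThueColoring G φ)
    (hedge : G.edgeSet.Nonempty) : thueNumber G = 2 := by
  refine le_antisymm (thueNumber_le hφ) ?_
  obtain ⟨ψ, hψ⟩ := exists_isThueColoring_thueNumber hφ
  obtain ⟨⟨a, b⟩, hab⟩ := hedge
  have hne := Fin.val_ne_of_ne (hψ.1 hab)
  have := (ψ a).isLt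
  have := (ψ b).isLt
  omega

theorem thueNumber_bot [Nonempty V] : thueNumber (⊥ : SimpleGraph V) = 1 := by
  have hφ : IsThueColoring (⊥ : SimpleGraph V) (fun _ => (0 : Fin 1)) :=
    isThueColoring_of_isPath_length_le_two (fun _ _ h => h.elim)
      (fun _ _ p _ => by cases p with | nil => simp | cons h _ => exact h.elim)
  refine le_antisymm (thueNumber_le hφ) ?_
  obtain ⟨ψ, -⟩ := exists_isThueColoring_thueNumber hφ
  exact Nat.one_le_iff_ne_zero.mpr (Fin.pos (ψ (Classical.arbitrary V))).ne'

end Thue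

namespace IsEdgeOrdering

variable {V : Type*} {G : SimpleGraph V} {l l' : List (Sym2 V)}

theorem length_eq (hl : IsEdgeOrdering G l) (hl' : IsEdgeOrdering G l') :
    l.length = l'.length :=
  ((List.perm_ext_iff_of_nodup hl.1 hl'.1).mpr fun e => by rw [hl.2, hl'.2]).length_eq

theorem edgeSet_deleteEdges_take_nonempty (hl : IsEdgeOrdering G l) {i : ℕ}
    (hi : i < l.length) : (G.deleteEdges {e | e ∈ l.take i}).edgeSet.Nonempty := by
  refine ⟨l[i], ?_⟩
  rw [edgeSet_deleteEdges]
  refine ⟨(hl.2 _).mp (List.getElem_mem hi), fun hmem => ?_⟩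
  obtain ⟨j, hj, hji⟩ := List.getElem_of_mem hmem
  rw [List.getElem_take] at hji
  have := (List.Nodup.getElem_inj_iff hl.1).mp hji
  simp at hj
  omega

theorem deleteEdges_eq_bot (hl : IsEdgeOrdering G l) : G.deleteEdges {e | e ∈ l} = ⊥ := by
  have : {e | e ∈ l} = G.edgeSet := Set.ext hl.2
  rw [this, deleteEdges_edgeSet, sdiff_self]

end IsEdgeOrdering

section Tau

variable {V : Type*} [Nonempty V] {G : SimpleGraph V} {φ : V → Fin 2}

theorem tauValue_eq_of_isThueColoring (hφ : IsThueColoring G φ) {l : List (Sym2 V)}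
    (hl : IsEdgeOrdering G l) :
    tauValue G l = (2 * l.length + 1) / (l.length + 1) := by
  have hprefix : ∀ i ∈ Finset.range l.length,
      (thueNumber (G.deleteEdges {e | e ∈ l.take i}) : ℝ) = 2 := fun i hi => by
    rw [thueNumber_eq_two (hφ.anti (deleteEdges_le _))
      (hl.edgeSet_deleteEdges_take_nonempty (Finset.mem_range.mp hi))]
    norm_num
  rw [tauValue, Finset.sum_range_succ, Finset.sum_congr rfl hprefix, List.take_length,
    hl.deleteEdges_eq_bot, thueNumber_bot]
  simp [mul_comm]

theorem tauIndex_eq_of_isThueColoring (hφ : IsThueColoring G φ) {l : List (Sym2 V)}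
    (hl : IsEdgeOrdering G l) :
    tauIndex G = (2 * l.length + 1) / (l.length + 1) := by
  have hvalues : {x | ∃ l' : List (Sym2 V), IsEdgeOrdering G l' ∧ tauValue G l' = x} =
      {(2 * l.length + 1 : ℝ) / (l.length + 1)} := by
    ext x
    constructor
    · rintro ⟨l', hl', rfl⟩
      rw [tauValue_eq_of_isThueColoring hφ hl', hl'.length_eq hl]
      rfl
    · rintro rfl
      exact ⟨l, hl, tauValue_eq_of_isThueColoring hφ hl⟩
  rw [tauIndex, hvalues, csInf_singleton]

end Tau

section Star

variable {α β : Type*}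

theorem completeBipartiteGraph_isPath_length_le_two [Subsingleton α] {a b : α ⊕ β}
    (p : (completeBipartiteGraph α β).Walk a b) (hp : p.IsPath) : p.length ≤ 2 := by
  by_contra! hlong
  have hadj : ∀ i < 3, (completeBipartiteGraph α β).Adj (p.getVert i) (p.getVert (i + 1)) :=
    fun i hi => p.adj_getVert_succ (by omega)
  have hinj : ∀ i ≤ 3, ∀ j ≤ 3, p.getVert i = p.getVert j → i = j :=
    fun i hi j hj => hp.getVert_injOn (by simp; omega) (by simp; omega)
  have hcentre : ∀ {u v : α ⊕ β}, u.isLeft → v.isLeft → u = v := fun hu hv => by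
    obtain ⟨x, rfl⟩ := Sum.isLeft_iff.mp hu
    obtain ⟨y, rfl⟩ := Sum.isLeft_iff.mp hv
    rw [Subsingleton.elim x y]
  -- of two consecutive inner vertices one is the centre, and so is the vertex two steps away
  rcases hadj 1 (by omega) with ⟨h1, h2⟩ | ⟨h1, h2⟩
  · obtain ⟨-, h3⟩ := (hadj 2 (by omega)).resolve_left (by simp [h2])
    exact absurd (hinj 1 (by omega) 3 (by omega) (hcentre h1 h3)) (by omega)
  · obtain ⟨h0, -⟩ := (hadj 0 (by omega)).resolve_right (by simp [h1])
    exact absurd (hinj 0 (by omega) 2 (by omega) (hcentre h0 h2)) (by omega)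

theorem completeBipartiteGraph_isThueColoring [Subsingleton α] :
    IsThueColoring (completeBipartiteGraph α β) (Sum.elim (fun _ => (0 : Fin 2)) fun _ => 1) :=
  isThueColoring_of_isPath_length_le_two
    (by rintro (a | a) (b | b) hab <;> simp_all)
    fun _ _ => completeBipartiteGraph_isPath_length_le_two

theorem isEdgeOrdering_star (n : ℕ) :
    IsEdgeOrdering (completeBipartiteGraph (Fin 1) (Fin n))
      ((List.finRange n).map fun j => s(Sum.inl 0, Sum.inr j)) := by
  refine ⟨(List.nodup_finRange n).map fun j j' h => by simpa using h, ?_⟩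
  rintro ⟨a | a, b | b⟩ <;> simp [Fin.fin_one_eq_zero]

end Star

theorem top_fin_two_isThueColoring : IsThueColoring (⊤ : SimpleGraph (Fin 2)) id :=
  isThueColoring_of_isPath_length_le_two (fun _ _ hab => hab.ne)
    fun _ _ _ hp => by simpa using hp.length_lt.le

theorem top_fin_two_isEdgeOrdering : IsEdgeOrdering (⊤ : SimpleGraph (Fin 2)) [s(0, 1)] := by
  refine ⟨List.nodup_singleton _, ?_⟩
  rintro ⟨a, b⟩
  fin_cases a <;> fin_cases b <;> simp [Sym2.eq_swap]

/-- the star `K_{1,n}` satisfies `τ(K_{1,n}) = (2n+1)/(n+1)` for all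
`n ≥ 1`; consequently the infimum of `τ` over all graphs with at least one edge is
strictly less than `2` (i.e. some graph with an edge has `τ(G) < 2`). -/
theorem tauIndex_star_and_lt_two :
    (∀ n : ℕ, 1 ≤ n →
      tauIndex (completeBipartiteGraph (Fin 1) (Fin n)) = (2 * n + 1) / (n + 1)) ∧
    ∃ (m : ℕ) (G : SimpleGraph (Fin m)), G.edgeSet.Nonempty ∧ tauIndex G < 2 := by
  refine ⟨fun n _ => ?_, 2, ⊤, ⟨s(0, 1), by simp⟩, ?_⟩
  · rw [tauIndex_eq_of_isThueColoring completeBipartiteGraph_isThueColoring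
      (isEdgeOrdering_star n)]
    simp
  · rw [tauIndex_eq_of_isThueColoring top_fin_two_isThueColoring top_fin_two_isEdgeOrdering]
    norm_num
end

section
/- For the path P_n on n ≥ 3 vertices, the Thue reach equals the diameter: π_R(P_n) = diam(P_n) = n − 1. In particular, there exists a Thue colouring of P_n using exactly π(P_n) colours in which the two end vertices receive the same colour. -/
open SimpleGraph Function

/-- The Thue reach `π_R(G)`: the maximum, over all Thue colourings `φ` of `G` using
exactly `π(G)` colours and all pairs of distinct equally coloured vertices `u, v`, of
the distance `d_G(u,v)` (equivalently, the maximum of the positive Thue colour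
diameters `π_D(c)`). -/
noncomputable def thueReach {V : Type*} (G : SimpleGraph V) : ℕ :=
  sSup {d | 0 < d ∧ ∃ φ : V → Fin (thueNumber G), Function.Surjective φ ∧
    IsThueColoring G φ ∧ ∃ u v : V, u ≠ v ∧ φ u = φ v ∧ G.dist u v = d}

/-!
An optimal Thue colouring of `P_n` giving both ends the same colour shows `π_R(P_n) ≥ n - 1`, and
no two vertices of `P_n` are further apart. Paths of `P_n` run through intervals, so Thue colourings
of `P_n` are square-free words of length `n`; binary square-free words have length at most 3,
whence `π(P_3) = 2` and `π(P_n) = 3` for `n ≥ 4`. For `n ≥ 4` the colouring is a factor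
`d i, …, d (i + n - 1)` with `d i = d (i + n - 1)` of the square-free ternary word
`d j = t (j + 1) - t j + 1`, where `t` is the overlap-free Thue–Morse word. Such an `i` lies just
below a power of two: as `t (2 ^ K + r) = ¬ t r` and `t (2 ^ K - 1 - y) = t y ⊕ [K odd]`, a suitable
parity of `K` reduces `d i = d (i + n - 1)` to `t s ⊕ t (s + 1) = t s' ⊕ t (s' + 1)` with
`s + s' = n - 3`, which holds for `s = s'` if `n` is odd, and for `s = 3` if `n ≥ 6` is even,
both sides being `true` at even positions.
-/

def HasSquareAt {α : Type*} (w : ℕ → α) (b m : ℕ) : Prop :=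
  ∀ j < m, w (b + j) = w (b + m + j)

lemma hasSquareAt_one_iff {α : Type*} {w : ℕ → α} {b : ℕ} :
    HasSquareAt w b 1 ↔ w b = w (b + 1) := by
  simp [HasSquareAt]

/-- The parity of the binary digit sum of `n`. -/
def thueMorse : ℕ → Bool
  | 0 => false
  | n + 1 => ((n + 1) % 2 == 1) ^^ thueMorse ((n + 1) / 2)

@[simp]
lemma thueMorse_two_mul (n : ℕ) : thueMorse (2 * n) = thueMorse n := by
  rcases n with _ | n
  · rfl
  · rw [show 2 * (n + 1) = (2 * n + 1) + 1 by ring, thueMorse]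
    simp [show (2 * n + 1 + 1) % 2 = 0 by omega, show (2 * n + 1 + 1) / 2 = n + 1 by omega]

@[simp]
lemma thueMorse_two_mul_add_one (n : ℕ) : thueMorse (2 * n + 1) = !thueMorse n := by
  rw [thueMorse]
  simp [show (2 * n + 1) / 2 = n by omega]

lemma odd_of_thueMorse_eq_succ {j : ℕ} (h : thueMorse j = thueMorse (j + 1)) : Odd j := by
  rcases Nat.even_or_odd' j with ⟨a, rfl | rfl⟩
  · simp at h
  · exact odd_two_mul_add_one a

theorem thueMorse_not_overlap {p : ℕ} (hp : 0 < p) (i : ℕ) :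
    ¬∀ k ≤ p, thueMorse (i + k) = thueMorse (i + p + k) := by
  induction p using Nat.strong_induction_on generalizing i with
  | _ p ih =>
  intro H
  rcases Nat.even_or_odd' p with ⟨q, rfl | rfl⟩
  · obtain ⟨x, rfl | rfl⟩ := Nat.even_or_odd' i
    · refine ih q (by omega) (by omega) x fun j hj => ?_
      simpa [show 2 * x + 2 * j = 2 * (x + j) by ring,
        show 2 * x + 2 * q + 2 * j = 2 * (x + q + j) by ring] using H (2 * j) (by omega)
    · refine ih q (by omega) (by omega) x fun j hj => ?_
      simpa [show 2 * x + 1 + 2 * j = 2 * (x + j) + 1 by ring,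
        show 2 * x + 1 + 2 * q + 2 * j = 2 * (x + q + j) + 1 by ring] using H (2 * j) (by omega)
  · -- an equal adjacent pair sits at an odd position, and would reappear an odd distance later
    have hstep : ∀ d < 2 * q + 1, thueMorse (i + d + 1) = !thueMorse (i + d) := by
      intro d hd
      refine Bool.eq_not_of_ne fun heq => ?_
      have h2 := H (d + 1) (by omega)
      rw [← add_assoc, ← add_assoc] at h2
      have hshift : thueMorse (i + (2 * q + 1) + d) = thueMorse (i + (2 * q + 1) + d + 1) := by
        rw [← H d (by omega), ← h2, heq]
      obtain ⟨a, ha⟩ := odd_of_thueMorse_eq_succ heq.symm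
      obtain ⟨b, hb⟩ := odd_of_thueMorse_eq_succ hshift
      omega
    have halt : ∀ d ≤ 2 * q + 1, thueMorse (i + d) = (thueMorse i ^^ decide (Odd d)) := by
      intro d hd
      induction d with
      | zero => simp
      | succ d ihd =>
        rw [← add_assoc, hstep d (by omega), ihd (by omega)]
        simp [Nat.odd_add_one, ← Nat.not_even_iff_odd]
    simpa [halt (2 * q + 1) le_rfl] using H 0 (by omega)

lemma thueMorse_two_pow_add {K r : ℕ} (hr : r < 2 ^ K) :
    thueMorse (2 ^ K + r) = !thueMorse r := by
  induction K generalizing r with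
  | zero =>
    obtain rfl : r = 0 := by simpa using hr
    simpa using thueMorse_two_mul_add_one 0
  | succ K ih =>
    obtain ⟨z, rfl | rfl⟩ := Nat.even_or_odd' r
    · rw [show 2 ^ (K + 1) + 2 * z = 2 * (2 ^ K + z) by ring]
      simp [ih (show z < 2 ^ K by omega)]
    · rw [show 2 ^ (K + 1) + (2 * z + 1) = 2 * (2 ^ K + z) + 1 by ring]
      simp [ih (show z < 2 ^ K by omega)]

lemma thueMorse_two_pow_sub_one_sub {K y : ℕ} (hy : y < 2 ^ K) :
    thueMorse (2 ^ K - 1 - y) = (thueMorse y ^^ decide (Odd K)) := by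
  induction K generalizing y with
  | zero =>
    obtain rfl : y = 0 := by simpa using hy
    simp
  | succ K ih =>
    obtain ⟨z, rfl | rfl⟩ := Nat.even_or_odd' y
    · rw [show 2 ^ (K + 1) - 1 - 2 * z = 2 * (2 ^ K - 1 - z) + 1 by rw [pow_succ]; omega]
      simp [ih (show z < 2 ^ K by omega), Nat.odd_add_one, ← Nat.not_even_iff_odd]
    · rw [show 2 ^ (K + 1) - 1 - (2 * z + 1) = 2 * (2 ^ K - 1 - z) by rw [pow_succ]; omega]
      simp [ih (show z < 2 ^ K by omega), Nat.odd_add_one, ← Nat.not_even_iff_odd]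

/-- `thueMorse (n + 1) - thueMorse n + 1`, read in `Fin 3`. -/
def thueTernary (n : ℕ) : Fin 3 :=
  if thueMorse n = thueMorse (n + 1) then 1 else if thueMorse n then 0 else 2

lemma thueTernary_eq_iff {i j : ℕ} : thueTernary i = thueTernary j ↔
    (thueMorse i = thueMorse j ∧ thueMorse (i + 1) = thueMorse (j + 1)) ∨
      (thueMorse i = thueMorse (i + 1) ∧ thueMorse j = thueMorse (j + 1)) := by
  unfold thueTernary
  cases thueMorse i <;> cases thueMorse (i + 1) <;> cases thueMorse j <;>
    cases thueMorse (j + 1) <;> decide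

theorem thueTernary_not_hasSquareAt (b : ℕ) {m : ℕ} (hm : 0 < m) :
    ¬HasSquareAt thueTernary b m := by
  intro H
  have hprop : ∀ k < m, (thueMorse (b + k) = thueMorse (b + m + k) ↔
      thueMorse (b + k + 1) = thueMorse (b + m + k + 1)) := by
    intro k hk
    rcases thueTernary_eq_iff.1 (H k hk) with ⟨h1, h2⟩ | ⟨h1, h2⟩
    · simp [h1, h2]
    · rw [h1, h2]
  have hall : ∀ k ≤ m, (thueMorse (b + k) = thueMorse (b + m + k) ↔
      thueMorse b = thueMorse (b + m)) := by
    intro k hk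
    induction k with
    | zero => rfl
    | succ k ih => exact (hprop k hk).symm.trans (ih (by omega))
  by_cases h0 : thueMorse b = thueMorse (b + m)
  · exact thueMorse_not_overlap hm b fun k hk => (hall k hk).2 h0
  · -- complementary halves force `thueTernary = 1` on the square, i.e. a cube in `thueMorse`
    have hflat : ∀ k < m, thueMorse (b + k) = thueMorse (b + k + 1) ∧
        thueMorse (b + m + k) = thueMorse (b + m + k + 1) := fun k hk =>
      (thueTernary_eq_iff.1 (H k hk)).resolve_left fun h => h0 ((hall k hk.le).1 h.1)
    refine thueMorse_not_overlap one_pos b fun k hk => ?_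
    obtain rfl | rfl : k = 0 ∨ k = 1 := by omega
    · exact (hflat 0 hm).1
    · obtain h1 | rfl : 1 < m ∨ m = 1 := by omega
      · exact (hflat 1 h1).1
      · exact (hflat 0 hm).2

lemma exists_thueTernary_add_eq (s : ℕ) (c : Fin 3) : ∃ j ≤ 3, thueTernary (s + j) = c := by
  have hne (k : ℕ) : thueTernary k ≠ thueTernary (k + 1) := fun h =>
    thueTernary_not_hasSquareAt k one_pos (hasSquareAt_one_iff.2 h)
  have hsq : ¬(thueTernary s = thueTernary (s + 2) ∧
      thueTernary (s + 1) = thueTernary (s + 3)) := fun ⟨h0, h1⟩ =>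
    thueTernary_not_hasSquareAt s two_pos fun j hj => by interval_cases j <;> assumption
  have key : ∀ a b c d x : Fin 3, a ≠ b → b ≠ c → c ≠ d → ¬(a = c ∧ b = d) →
      x = a ∨ x = b ∨ x = c ∨ x = d := by decide
  rcases key _ _ _ _ c (hne s) (hne (s + 1)) (hne (s + 2)) hsq with h | h | h | h
  exacts [⟨0, by omega, h.symm⟩, ⟨1, by omega, h.symm⟩, ⟨2, by omega, h.symm⟩,
    ⟨3, by omega, h.symm⟩]

lemma exists_thueTernary_eq_add_of_xor_eq {m t : ℕ} (ht : t + 2 ≤ m)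
    (h : (thueMorse t ^^ thueMorse (t + 1)) =
      (thueMorse (m - 2 - t) ^^ thueMorse (m - 1 - t))) :
    ∃ i, thueTernary i = thueTernary (i + m) := by
  have hm : m < 2 ^ (2 * m) :=
    Nat.lt_two_pow_self.trans_le (Nat.pow_le_pow_right two_pos (by omega))
  obtain ⟨K, hmK, hKP⟩ : ∃ K, m < 2 ^ K ∧
      decide (Odd K) = (thueMorse (t + 1) ^^ !thueMorse (m - 2 - t)) := by
    cases (thueMorse (t + 1) ^^ !thueMorse (m - 2 - t))
    · exact ⟨2 * m, hm, by simp⟩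
    · exact ⟨2 * m + 1, hm.trans (Nat.pow_lt_pow_right one_lt_two (by omega)), by simp⟩
  refine ⟨2 ^ K - 1 - (t + 1), thueTernary_eq_iff.2 (Or.inl ⟨?_, ?_⟩)⟩
  · rw [show 2 ^ K - 1 - (t + 1) + m = 2 ^ K + (m - 2 - t) by omega,
      thueMorse_two_pow_add (by omega), thueMorse_two_pow_sub_one_sub (by omega), hKP]
    cases thueMorse (t + 1) <;> cases thueMorse (m - 2 - t) <;> rfl
  · rw [show 2 ^ K - 1 - (t + 1) + 1 = 2 ^ K - 1 - t by omega,
      show 2 ^ K - 1 - (t + 1) + m + 1 = 2 ^ K + (m - 1 - t) by omega,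
      thueMorse_two_pow_add (by omega), thueMorse_two_pow_sub_one_sub (by omega), hKP]
    revert h
    cases thueMorse t <;> cases thueMorse (t + 1) <;> cases thueMorse (m - 2 - t) <;>
      cases thueMorse (m - 1 - t) <;> decide

theorem exists_thueTernary_eq_add {m : ℕ} (hm : 3 ≤ m) :
    ∃ i, thueTernary i = thueTernary (i + m) := by
  obtain ⟨z, rfl | rfl⟩ := Nat.even_or_odd' m
  · refine exists_thueTernary_eq_add_of_xor_eq (t := z - 1) (by omega) ?_
    rw [show 2 * z - 2 - (z - 1) = z - 1 by omega, show 2 * z - 1 - (z - 1) = z - 1 + 1 by omega]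
  obtain rfl | hz := eq_or_ne z 1
  · exact ⟨0, by simp [thueTernary, thueMorse]⟩
  · refine exists_thueTernary_eq_add_of_xor_eq (t := 3) (by omega) ?_
    rw [show 2 * z + 1 - 2 - 3 = 2 * (z - 2) by omega,
      show 2 * z + 1 - 1 - 3 = 2 * (z - 2) + 1 by omega]
    simp [thueMorse]

theorem pathGraph_support_of_isPath {n : ℕ} {a b : Fin n} {p : (pathGraph n).Walk a b}
    (hp : p.IsPath) :
    (p.support.map Fin.val = List.range' a (p.length + 1) ∧ (b : ℕ) = a + p.length) ∨
      (p.support.map Fin.val = (List.range' b (p.length + 1)).reverse ∧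
        (a : ℕ) = b + p.length) := by
  induction p with
  | nil => simp
  | @cons a c b hac q ih =>
    rw [Walk.cons_isPath_iff] at hp
    have ha : (a : ℕ) ∉ q.support.map Fin.val :=
      (List.mem_map_of_injective Fin.val_injective).not.2 hp.2
    -- the path keeps the direction of its first step, or it would come back through `a`
    rcases pathGraph_adj.1 hac with hac | hac
    · have hq : q.support.map Fin.val = List.range' c (q.length + 1) ∧
          (b : ℕ) = c + q.length := by
        rcases ih hp.1 with hq | ⟨hs, hc⟩
        · exact hq
        obtain h0 | hpos := Nat.eq_zero_or_pos q.length
        · exact ⟨by simp [hs, h0, hc], by omega⟩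
        · exact absurd (by rw [hs]; simp only [List.mem_reverse, List.mem_range'_1]; omega) ha
      left
      refine ⟨?_, by rw [Walk.length_cons]; omega⟩
      simp [hq.1, List.range'_succ, hac]
    · have hq : q.support.map Fin.val = (List.range' b (q.length + 1)).reverse ∧
          (c : ℕ) = b + q.length := by
        rcases ih hp.1 with ⟨hs, hb⟩ | hq
        · obtain h0 | hpos := Nat.eq_zero_or_pos q.length
          · exact ⟨by simp [hs, h0, hb], by omega⟩
          · exact absurd (by rw [hs]; simp only [List.mem_range'_1]; omega) ha
        · exact hq
      right
      refine ⟨?_, by rw [Walk.length_cons]; omega⟩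
      simp [hq.1, List.range'_concat, ← hac, hq.2, add_assoc]

lemma pathGraph_dist {n : ℕ} (a b : Fin n) : (pathGraph n).dist a b = Nat.dist a b := by
  obtain ⟨p, hp, hlen⟩ := (pathGraph_preconnected n a b).exists_path_of_dist
  rw [← hlen, Nat.dist]
  rcases pathGraph_support_of_isPath hp with ⟨-, h⟩ | ⟨-, h⟩ <;> omega

lemma pathGraph_diam (n : ℕ) : (pathGraph n).diam = n - 1 := by
  rcases n with _ | n
  · simp [diam_def]
  apply le_antisymm
  · obtain ⟨u, v, huv⟩ := (pathGraph (n + 1)).exists_dist_eq_diam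
    rw [← huv, pathGraph_dist, Nat.dist]
    omega
  · calc n + 1 - 1 = (pathGraph (n + 1)).dist 0 (Fin.last n) := by
          simp [pathGraph_dist, Nat.dist]
      _ ≤ _ := dist_le_diam (connected_iff_ediam_ne_top.1 (pathGraph_connected n))

lemma hasSquareAt_of_map_range' {α : Type*} {w : ℕ → α} {b m : ℕ} {l : List α}
    (h : (List.range' b (2 * m)).map w = l ++ l) : HasSquareAt w b m := by
  have hl : l.length = m := by
    have := congrArg List.length h
    simp only [List.length_map, List.length_range', List.length_append] at this
    omega
  have key : ∀ i < 2 * m, (l ++ l)[i]? = some (w (b + i)) := fun i hi => by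
    rw [← h]
    simp [hi]
  intro j hj
  have k1 := key j (by omega)
  have k2 := key (m + j) (by omega)
  rw [List.getElem?_append_left (by omega)] at k1
  rw [List.getElem?_append_right (by omega), hl, Nat.add_sub_cancel_left, ← add_assoc] at k2
  exact Option.some.inj (k1.symm.trans k2)

theorem isThueColoring_pathGraph_of_not_hasSquareAt {α : Type*} {n : ℕ} (w : ℕ → α)
    (hw : ∀ b m, 0 < m → b + 2 * m ≤ n → ¬HasSquareAt w b m) :
    IsThueColoring (pathGraph n) (w ∘ Fin.val) := by
  refine ⟨fun a b hab heq => ?_, fun a b p hp l hl hsq => ?_⟩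
  · rcases pathGraph_adj.1 hab with h | h
    · exact hw a 1 one_pos (by omega) (hasSquareAt_one_iff.2 (by simpa [h] using heq))
    · exact hw b 1 one_pos (by omega) (hasSquareAt_one_iff.2 (by simpa [h] using heq.symm))
  have hlen : p.length + 1 = 2 * l.length := by
    simpa [two_mul] using congrArg List.length hsq
  have hl0 : 0 < l.length := List.length_pos_iff.2 hl
  rw [← List.map_map] at hsq
  rcases pathGraph_support_of_isPath hp with ⟨hs, hb⟩ | ⟨hs, ha⟩
  · rw [hs, hlen] at hsq
    exact hw a l.length hl0 (by omega) (hasSquareAt_of_map_range' hsq)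
  · rw [hs, hlen, List.map_reverse, List.reverse_eq_iff, List.reverse_append] at hsq
    exact hw b l.length hl0 (by omega) (hasSquareAt_of_map_range' hsq)

lemma IsThueColoring.comp_injective {V α β : Type*} {G : SimpleGraph V} {φ : V → α}
    {g : α → β} (hφ : IsThueColoring G φ) (hg : Injective g) : IsThueColoring G (g ∘ φ) := by
  refine ⟨fun a b h => hg.ne (hφ.1 h), fun a b p hp l hl hsq => ?_⟩
  rw [← List.map_map] at hsq
  set L := p.support.map φ
  have htake : (L.take l.length).map g = l := by rw [List.map_take, hsq, List.take_left]
  have hdrop : (L.drop l.length).map g = l := by rw [List.map_drop, hsq, List.drop_left]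
  refine hφ.2 p hp (L.take l.length) (fun h => hl (by rw [← htake, h, List.map_nil])) ?_
  calc L = L.take l.length ++ L.drop l.length := (List.take_append_drop _ _).symm
    _ = L.take l.length ++ L.take l.length := by
      rw [List.map_injective_iff.2 hg (hdrop.trans htake.symm)]

lemma thueNumber_eq_succ {V : Type*} {G : SimpleGraph V} {k : ℕ}
    (hk : ∃ φ : V → Fin (k + 1), IsThueColoring G φ)
    (hlt : ∀ φ : V → Fin k, ¬IsThueColoring G φ) : thueNumber G = k + 1 := by
  refine le_antisymm (Nat.sInf_le hk) (Nat.succ_le_of_lt (lt_of_not_ge fun hle => ?_))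
  obtain ⟨φ, hφ⟩ := Nat.sInf_mem (s := {k | ∃ φ : V → Fin k, IsThueColoring G φ}) ⟨_, hk⟩
  exact hlt _ (hφ.comp_injective (Fin.castLE_injective hle))

lemma isThueColoring_pathGraph_three :
    IsThueColoring (pathGraph 3) ((fun j : ℕ => if j = 1 then (1 : Fin 2) else 0) ∘ Fin.val) :=
  isThueColoring_pathGraph_of_not_hasSquareAt (n := 3) _ fun b m hm hb h => by
    obtain rfl : m = 1 := by omega
    rw [hasSquareAt_one_iff] at h
    obtain rfl | rfl : b = 0 ∨ b = 1 := by omega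
    all_goals simp at h

lemma thueNumber_pathGraph_three : thueNumber (pathGraph 3) = 2 :=
  thueNumber_eq_succ ⟨_, isThueColoring_pathGraph_three⟩ fun _ hφ =>
    hφ.1 (pathGraph_adj.2 (Or.inl rfl) : (pathGraph 3).Adj 0 1) (Subsingleton.elim _ _)

lemma not_isThueColoring_pathGraph_fin_two {n : ℕ} (hn : 4 ≤ n) (φ : Fin n → Fin 2) :
    ¬IsThueColoring (pathGraph n) φ := by
  intro hφ
  have hadj (i j : ℕ) (hi : i < n) (hj : j < n) (h : i + 1 = j) :
      (pathGraph n).Adj ⟨i, hi⟩ ⟨j, hj⟩ :=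
    pathGraph_adj.2 (Or.inl h)
  have h01 := hadj 0 1 (by omega) (by omega) rfl
  have h12 := hadj 1 2 (by omega) (by omega) rfl
  have h23 := hadj 2 3 (by omega) (by omega) rfl
  let p : (pathGraph n).Walk ⟨0, by omega⟩ ⟨3, by omega⟩ := .cons h01 (.cons h12 (.cons h23 .nil))
  have hp : p.IsPath := by simp [p, Walk.isPath_def]
  -- with two colours a proper colouring alternates, so `φ` reads `abab` along `p`
  have := hφ.1 h01
  have := hφ.1 h12
  have := hφ.1 h23
  refine hφ.2 p hp [φ ⟨0, by omega⟩, φ ⟨1, by omega⟩] (by simp) ?_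
  simp only [p, Walk.support_cons, Walk.support_nil, List.map_cons, List.map_nil,
    List.cons_append, List.nil_append, List.cons.injEq, true_and]
  exact ⟨by omega, by omega, trivial⟩

lemma thueNumber_pathGraph_of_four_le {n : ℕ} (hn : 4 ≤ n) : thueNumber (pathGraph n) = 3 :=
  thueNumber_eq_succ
    ⟨_, isThueColoring_pathGraph_of_not_hasSquareAt _ fun b _ hm _ =>
      thueTernary_not_hasSquareAt b hm⟩
    (not_isThueColoring_pathGraph_fin_two hn)

lemma thueReach_eq_diam {V : Type*} [Finite V] {G : SimpleGraph V} (hG : G.Connected)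
    {φ : V → Fin (thueNumber G)} (hsurj : Surjective φ) (hφ : IsThueColoring G φ) {u v : V}
    (huv : u ≠ v) (hφuv : φ u = φ v) (hd : G.dist u v = G.diam) : thueReach G = G.diam := by
  have := hG.nonempty
  refine IsGreatest.csSup_eq ⟨⟨hd ▸ hG.pos_dist_of_ne huv, φ, hsurj, hφ, u, v, huv, hφuv, hd⟩, ?_⟩
  rintro _ ⟨-, -, -, -, x, y, -, -, rfl⟩
  exact dist_le_diam (connected_iff_ediam_ne_top.1 hG)

lemma exists_thueColoring_pathGraph_three :
    ∃ φ : Fin 3 → Fin (thueNumber (pathGraph 3)), Surjective φ ∧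
      IsThueColoring (pathGraph 3) φ ∧ φ 0 = φ 2 := by
  rw [thueNumber_pathGraph_three]
  refine ⟨_, fun c => ?_, isThueColoring_pathGraph_three, rfl⟩
  fin_cases c
  exacts [⟨0, rfl⟩, ⟨1, rfl⟩]

lemma exists_thueColoring_pathGraph_of_four_le {n : ℕ} (hn : 4 ≤ n) :
    ∃ φ : Fin n → Fin (thueNumber (pathGraph n)), Surjective φ ∧
      IsThueColoring (pathGraph n) φ ∧ φ ⟨0, by omega⟩ = φ ⟨n - 1, by omega⟩ := by
  rw [thueNumber_pathGraph_of_four_le hn]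
  obtain ⟨i, hi⟩ := exists_thueTernary_eq_add (m := n - 1) (by omega)
  refine ⟨(fun t => thueTernary (i + t)) ∘ Fin.val, fun c => ?_,
    isThueColoring_pathGraph_of_not_hasSquareAt _ fun b m hm _ h => ?_, by simpa using hi⟩
  · obtain ⟨j, hj, hjc⟩ := exists_thueTernary_add_eq i c
    exact ⟨⟨j, by omega⟩, hjc⟩
  · exact thueTernary_not_hasSquareAt (i + b) hm fun j hj => by simpa [add_assoc] using h j hj

/-- for the path `P_n`, `n ≥ 3`, the Thue reach equals the diameter,
`π_R(P_n) = diam(P_n) = n − 1`; in particular some Thue colouring with exactly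
`π(P_n)` colours gives the two end vertices the same colour. -/
theorem thueReach_pathGraph (n : ℕ) (hn : 3 ≤ n) :
    thueReach (pathGraph n) = (pathGraph n).diam ∧
    (pathGraph n).diam = n - 1 ∧
    ∃ φ : Fin n → Fin (thueNumber (pathGraph n)), Function.Surjective φ ∧
      IsThueColoring (pathGraph n) φ ∧
      φ ⟨0, by omega⟩ = φ ⟨n - 1, by omega⟩ := by
  obtain ⟨φ, hsurj, hφ, hends⟩ : ∃ φ : Fin n → Fin (thueNumber (pathGraph n)), Surjective φ ∧
      IsThueColoring (pathGraph n) φ ∧ φ ⟨0, by omega⟩ = φ ⟨n - 1, by omega⟩ := by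
    obtain rfl | hn := hn.eq_or_lt
    · exact exists_thueColoring_pathGraph_three
    · exact exists_thueColoring_pathGraph_of_four_le hn
  have hdist : (pathGraph n).dist ⟨0, by omega⟩ ⟨n - 1, by omega⟩ = (pathGraph n).diam := by
    simp [pathGraph_dist, pathGraph_diam, Nat.dist]
  have hconn : (pathGraph n).Connected := by
    obtain ⟨k, rfl⟩ := Nat.exists_eq_add_of_lt hn
    exact pathGraph_connected _
  exact ⟨thueReach_eq_diam hconn hsurj hφ (by simp only [ne_eq, Fin.mk.injEq]; omega) hends hdist,
    pathGraph_diam n, φ, hsurj, hφ, hends⟩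
end
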